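/- Let κ ≥ 1 and let (b_ℓ) be positive reals satisfying |b_ℓ - (2ℓ+1)| ≤ κ(2ℓ+1)^{2/3} and κ^{-1} ≤ b_ℓ/(2ℓ+1) ≤ κ. Assume H_{1,ℓ}(u) = h_ℓ(u)² satisfies h_ℓ(u)² ≤ C((2ℓ+1)^{1/3} + |u² - (2ℓ+1)|)^{-1/2} for all u ∈ ℝ. Then there is a constant C_κ such that for all x ≥ 1 and all u ∈ ℝ, the sum over ℓ with 2ℓ+1 ≤ x, (2ℓ+1) > |u|/√(2κ), and |u| - κ(2ℓ+1)^{2/3} < 2ℓ+1 < |u| + κ(2ℓ+1)^{2/3}, of h_ℓ(b_ℓ^{-1/2}u)², is at most C_κ x^{1/2}. -/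
import Mathlib

/-- The ℓ-th Hermite function. -/
noncomputable def hermiteFun (m : ℕ) (t : ℝ) : ℝ :=
  (-1) ^ m * (Real.sqrt ((m.factorial : ℝ) * 2 ^ m * Real.sqrt Real.pi))⁻¹ *
    Real.exp (t ^ 2 / 2) * iteratedDeriv m (fun u : ℝ => Real.exp (-u ^ 2)) t

lemma card_le_of_mem_bounds (s : Finset ℕ) (a b : ℝ) (hne : s.Nonempty)
    (h : ∀ ℓ ∈ s, a ≤ (ℓ:ℝ) ∧ (ℓ:ℝ) ≤ b) : (s.card : ℝ) ≤ b - a + 1 := by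
  obtain ⟨ℓ₀, hℓ₀⟩ := hne
  set a' : ℝ := max a 0 with ha'
  have hsub : s ⊆ Finset.Icc ⌈a'⌉₊ ⌊b⌋₊ := by
    intro ℓ hℓ
    obtain ⟨h1, h2⟩ := h ℓ hℓ
    exact Finset.mem_Icc.mpr ⟨Nat.ceil_le.mpr (max_le h1 (Nat.cast_nonneg ℓ)),
      Nat.le_floor h2⟩
  have hm : ⌈a'⌉₊ ≤ ⌊b⌋₊ := Finset.mem_Icc.mp (hsub hℓ₀) |>.1.trans
    (Finset.mem_Icc.mp (hsub hℓ₀)).2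
  have hcard := Finset.card_le_card hsub
  rw [Nat.card_Icc] at hcard
  have h2 : (s.card : ℝ) ≤ ((⌊b⌋₊ + 1 - ⌈a'⌉₊ : ℕ) : ℝ) := Nat.cast_le.mpr hcard
  rw [Nat.cast_sub (by omega)] at h2
  have hb0 : (0:ℝ) ≤ b := le_trans (Nat.cast_nonneg ℓ₀) (h ℓ₀ hℓ₀).2
  have hfl : (⌊b⌋₊ : ℝ) ≤ b := Nat.floor_le hb0
  have hcl : a ≤ (⌈a'⌉₊:ℝ) := le_trans (le_max_left a 0) (Nat.le_ceil a')
  push_cast at h2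
  linarith

set_option maxHeartbeats 1000000 in
theorem hermite_transition_region_bound (κ : ℝ) (hκ : 1 ≤ κ)
    (b : ℕ → ℝ) (hb : ∀ ℓ, 0 < b ℓ)
    (hbclose : ∀ ℓ : ℕ, |b ℓ - (2 * ℓ + 1)| ≤ κ * (2 * ℓ + 1 : ℝ) ^ ((2 : ℝ) / 3))
    (hκb : ∀ ℓ : ℕ, κ⁻¹ ≤ b ℓ / (2 * ℓ + 1) ∧ b ℓ / (2 * ℓ + 1) ≤ κ)
    (C : ℝ)
    (hmuck : ∀ (ℓ : ℕ) (u : ℝ),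
      hermiteFun ℓ u ^ 2 ≤ C * ((2 * ℓ + 1 : ℝ) ^ ((1 : ℝ) / 3) + |u ^ 2 - (2 * ℓ + 1)|) ^ (-(1 : ℝ) / 2)) :
    ∃ Cκ : ℝ, ∀ x : ℝ, 1 ≤ x → ∀ u : ℝ,
      (∑ ℓ ∈ (Finset.range (⌈x⌉₊ + 1)).filter (fun ℓ : ℕ =>
            2 * (ℓ:ℝ) + 1 ≤ x ∧ |u| / Real.sqrt (2 * κ) < 2 * ℓ + 1 ∧
            |u| - κ * (2 * ℓ + 1 : ℝ) ^ ((2 : ℝ) / 3) < 2 * ℓ + 1 ∧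
            (2 * ℓ + 1 : ℝ) < |u| + κ * (2 * ℓ + 1 : ℝ) ^ ((2 : ℝ) / 3)),
          hermiteFun ℓ ((Real.sqrt (b ℓ))⁻¹ * u) ^ 2)
        ≤ Cκ * x ^ ((1 : ℝ) / 2) := by
  have hκ0 : (0:ℝ) < κ := by linarith
  have hxp : (0:ℝ) < 2 * κ := by linarith
  have hκ3 : (1:ℝ) ≤ κ ^ 3 := one_le_pow₀ hκ
  -- C is nonnegative
  have hC : 0 ≤ C := by
    have h0 := hmuck 0 0
    have h1 : (0:ℝ) ≤ C * ((2 * (0:ℕ) + 1 : ℝ) ^ ((1 : ℝ) / 3) +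
        |(0:ℝ) ^ 2 - (2 * (0:ℕ) + 1)|) ^ (-(1 : ℝ) / 2) :=
      le_trans (sq_nonneg _) h0
    have h2 : (0:ℝ) < ((2 * (0:ℕ) + 1 : ℝ) ^ ((1 : ℝ) / 3) +
        |(0:ℝ) ^ 2 - (2 * (0:ℕ) + 1)|) ^ (-(1 : ℝ) / 2) := by
      apply Real.rpow_pos_of_pos
      positivity
    nlinarith [h1, h2]
  refine ⟨20 * C * κ ^ 5, fun x hx u => ?_⟩
  set s := (Finset.range (⌈x⌉₊ + 1)).filter (fun ℓ : ℕ =>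
        2 * (ℓ:ℝ) + 1 ≤ x ∧ |u| / Real.sqrt (2 * κ) < 2 * ℓ + 1 ∧
        |u| - κ * (2 * ℓ + 1 : ℝ) ^ ((2 : ℝ) / 3) < 2 * ℓ + 1 ∧
        (2 * ℓ + 1 : ℝ) < |u| + κ * (2 * ℓ + 1 : ℝ) ^ ((2 : ℝ) / 3)) with hs
  have hx0 : (0:ℝ) < x := by linarith
  have hx12 : (0:ℝ) ≤ x ^ ((1:ℝ)/2) := Real.rpow_nonneg hx0.le _
  rcases Finset.eq_empty_or_nonempty s with he | hne
  · rw [he, Finset.sum_empty]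
    exact mul_nonneg (mul_nonneg (by linarith) (by positivity)) hx12
  obtain ⟨ℓ₀, hℓ₀⟩ := hne
  set M : ℝ := max |u| 1 with hM
  have hM1 : (1:ℝ) ≤ M := le_max_right _ _
  have hM0 : (0:ℝ) < M := by linarith
  have huM : |u| ≤ M := le_max_left _ _
  have hsq1 : (1:ℝ) ≤ Real.sqrt (2*κ) := Real.one_le_sqrt.mpr (by linarith)
  have hsq0 : (0:ℝ) < Real.sqrt (2*κ) := by linarith
  have hsqle : Real.sqrt (2*κ) ≤ 2*κ := by
    nlinarith [Real.sq_sqrt hxp.le, hsq1]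
  have hmem : ∀ ℓ ∈ s, 2 * (ℓ:ℝ) + 1 ≤ x ∧ |u| / Real.sqrt (2 * κ) < 2 * ℓ + 1 ∧
      |u| - κ * (2 * ℓ + 1 : ℝ) ^ ((2 : ℝ) / 3) < 2 * ℓ + 1 ∧
      (2 * ℓ + 1 : ℝ) < |u| + κ * (2 * ℓ + 1 : ℝ) ^ ((2 : ℝ) / 3) := by
    intro ℓ hℓ
    rw [hs, Finset.mem_filter] at hℓ
    exact hℓ.2
  -- basic facts about n = 2ℓ+1 for ℓ ∈ s
  have hn1 : ∀ ℓ : ℕ, (1:ℝ) ≤ 2 * (ℓ:ℝ) + 1 := by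
    intro ℓ; have := Nat.cast_nonneg (α := ℝ) ℓ; linarith
  have hMn : ∀ ℓ ∈ s, M ≤ 2 * κ * (2 * (ℓ:ℝ) + 1) := by
    intro ℓ hℓ
    obtain ⟨-, h2, -, -⟩ := hmem ℓ hℓ
    have hu : |u| < Real.sqrt (2*κ) * (2 * (ℓ:ℝ) + 1) := by
      rw [div_lt_iff₀ hsq0] at h2; linarith [mul_comm (|u| / Real.sqrt (2*κ)) 0]
    have h1 := hn1 ℓ
    have : Real.sqrt (2*κ) * (2 * (ℓ:ℝ) + 1) ≤ 2 * κ * (2 * (ℓ:ℝ) + 1) := by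
      apply mul_le_mul_of_nonneg_right hsqle (by linarith)
    apply max_le (by linarith)
    nlinarith
  -- the term bound
  have hterm : ∀ ℓ ∈ s, hermiteFun ℓ ((Real.sqrt (b ℓ))⁻¹ * u) ^ 2 ≤
      (2 * κ * C) * M ^ (-(1:ℝ)/6) := by
    intro ℓ hℓ
    set n : ℝ := 2 * (ℓ:ℝ) + 1 with hn
    have hn0 : (0:ℝ) < n := by have := hn1 ℓ; linarith
    have h13 : (0:ℝ) < n ^ ((1:ℝ)/3) := Real.rpow_pos_of_pos hn0 _
    have step1 : (n ^ ((1:ℝ)/3) + |((Real.sqrt (b ℓ))⁻¹ * u) ^ 2 - n|) ^ (-(1:ℝ)/2) ≤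
        (n ^ ((1:ℝ)/3)) ^ (-(1:ℝ)/2) :=
      Real.rpow_le_rpow_of_nonpos h13 (le_add_of_nonneg_right (abs_nonneg _)) (by norm_num)
    have step2 : (n ^ ((1:ℝ)/3)) ^ (-(1:ℝ)/2) = n ^ (-(1:ℝ)/6) := by
      rw [← Real.rpow_mul hn0.le]
      norm_num
    -- n ^ (-1/6) ≤ 2κ * M ^ (-1/6)
    have hprodn : n ^ (-(1:ℝ)/6) * n ^ ((1:ℝ)/6) = 1 := by
      rw [← Real.rpow_add hn0]; norm_num
    have hprodM : M ^ (-(1:ℝ)/6) * M ^ ((1:ℝ)/6) = 1 := by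
      rw [← Real.rpow_add hM0]; norm_num
    have e1 : M ^ ((1:ℝ)/6) ≤ 2 * κ * n ^ ((1:ℝ)/6) := by
      calc M ^ ((1:ℝ)/6) ≤ (2 * κ * n) ^ ((1:ℝ)/6) :=
            Real.rpow_le_rpow hM0.le (hMn ℓ hℓ) (by norm_num)
        _ = (2*κ) ^ ((1:ℝ)/6) * n ^ ((1:ℝ)/6) := Real.mul_rpow hxp.le hn0.le
        _ ≤ 2 * κ * n ^ ((1:ℝ)/6) := by
            apply mul_le_mul_of_nonneg_right _ (Real.rpow_nonneg hn0.le _)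
            calc (2*κ) ^ ((1:ℝ)/6) ≤ (2*κ) ^ (1:ℝ) :=
                  Real.rpow_le_rpow_of_exponent_le (by linarith) (by norm_num)
              _ = 2*κ := Real.rpow_one _
    have e2 : n ^ (-(1:ℝ)/6) ≤ 2 * κ * M ^ (-(1:ℝ)/6) := by
      have hMneg : (0:ℝ) ≤ M ^ (-(1:ℝ)/6) := Real.rpow_nonneg hM0.le _
      have hnneg : (0:ℝ) ≤ n ^ (-(1:ℝ)/6) := Real.rpow_nonneg hn0.le _
      calc n ^ (-(1:ℝ)/6) = n ^ (-(1:ℝ)/6) * (M ^ (-(1:ℝ)/6) * M ^ ((1:ℝ)/6)) := by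
            rw [hprodM, mul_one]
        _ = (n ^ (-(1:ℝ)/6) * M ^ ((1:ℝ)/6)) * M ^ (-(1:ℝ)/6) := by ring
        _ ≤ (n ^ (-(1:ℝ)/6) * (2 * κ * n ^ ((1:ℝ)/6))) * M ^ (-(1:ℝ)/6) := by
            apply mul_le_mul_of_nonneg_right _ hMneg
            exact mul_le_mul_of_nonneg_left e1 hnneg
        _ = (2 * κ) * (n ^ (-(1:ℝ)/6) * n ^ ((1:ℝ)/6)) * M ^ (-(1:ℝ)/6) := by ring
        _ = 2 * κ * M ^ (-(1:ℝ)/6) := by rw [hprodn, mul_one]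
    calc hermiteFun ℓ ((Real.sqrt (b ℓ))⁻¹ * u) ^ 2
        ≤ C * (n ^ ((1:ℝ)/3) + |((Real.sqrt (b ℓ))⁻¹ * u) ^ 2 - n|) ^ (-(1:ℝ)/2) :=
          hmuck ℓ _
      _ ≤ C * (n ^ (-(1:ℝ)/6)) := by
          rw [← step2]; exact mul_le_mul_of_nonneg_left step1 hC
      _ ≤ C * (2 * κ * M ^ (-(1:ℝ)/6)) := mul_le_mul_of_nonneg_left e2 hC
      _ = (2 * κ * C) * M ^ (-(1:ℝ)/6) := by ring
  -- cardinality bound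
  have hκnR : ∀ ℓ ∈ s, κ * (2 * (ℓ:ℝ) + 1) ^ ((2:ℝ)/3) ≤ 4 * κ^3 * M ^ ((2:ℝ)/3) := by
    intro ℓ hℓ
    set n : ℝ := 2 * (ℓ:ℝ) + 1 with hn
    have hn0 : (0:ℝ) < n := by have := hn1 ℓ; linarith
    obtain ⟨-, -, -, h4⟩ := hmem ℓ hℓ
    -- n ≤ 8 κ^3 M
    have hn8 : n ≤ 8 * κ^3 * M := by
      by_cases hc : n ≤ 8 * κ^3
      · nlinarith
      · push_neg at hc
        have hcube : (((2*κ) ^ (3:ℕ) : ℝ)) ^ ((1:ℝ)/3) = 2*κ := by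
          rw [← Real.rpow_natCast (2*κ) 3, ← Real.rpow_mul hxp.le]
          norm_num
        have h8 : ((2*κ) ^ (3:ℕ) : ℝ) ≤ n := by nlinarith
        have hn13 : 2*κ ≤ n ^ ((1:ℝ)/3) := by
          rw [← hcube]
          exact Real.rpow_le_rpow (by positivity) h8 (by norm_num)
        have hsplit : n ^ ((2:ℝ)/3) * n ^ ((1:ℝ)/3) = n := by
          rw [← Real.rpow_add hn0]; norm_num
        have h23 : (0:ℝ) ≤ n ^ ((2:ℝ)/3) := Real.rpow_nonneg hn0.le _
        have hhalf : 2 * κ * n ^ ((2:ℝ)/3) ≤ n := by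
          nlinarith [mul_le_mul_of_nonneg_left hn13 h23]
        have hlt : n < 2 * M := by nlinarith
        nlinarith [hlt, hM0, hκ3]
    have h23 : n ^ ((2:ℝ)/3) ≤ (8 * κ^3 * M) ^ ((2:ℝ)/3) :=
      Real.rpow_le_rpow hn0.le hn8 (by norm_num)
    have hpow : (((2*κ) ^ (3:ℕ) : ℝ)) ^ ((2:ℝ)/3) = (2*κ) ^ (2:ℕ) := by
      rw [← Real.rpow_natCast (2*κ) 3, ← Real.rpow_mul hxp.le,
        ← Real.rpow_natCast (2*κ) 2]
      norm_num
    have hval : ((8 * κ^3 * M) : ℝ) ^ ((2:ℝ)/3) = 4 * κ^2 * M ^ ((2:ℝ)/3) := by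
      have h8κ : (8 * κ^3 * M : ℝ) = ((2*κ) ^ (3:ℕ)) * M := by ring
      rw [h8κ, Real.mul_rpow (by positivity) hM0.le, hpow]
      ring
    nlinarith [Real.rpow_nonneg hM0.le ((2:ℝ)/3)]
  set R : ℝ := 4 * κ^3 * M ^ ((2:ℝ)/3) with hR
  have hR4 : (4:ℝ) ≤ R := by
    have : (1:ℝ) ≤ M ^ ((2:ℝ)/3) := by
      calc (1:ℝ) = 1 ^ ((2:ℝ)/3) := (Real.one_rpow _).symm
        _ ≤ M ^ ((2:ℝ)/3) := Real.rpow_le_rpow zero_le_one hM1 (by norm_num)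
    nlinarith [this, hκ3, hR]
  have hbounds : ∀ ℓ ∈ s, (|u| - 1 - R)/2 ≤ (ℓ:ℝ) ∧ (ℓ:ℝ) ≤ (|u| - 1 + R)/2 := by
    intro ℓ hℓ
    obtain ⟨-, -, h3, h4⟩ := hmem ℓ hℓ
    have hκn := hκnR ℓ hℓ
    have hκn0 : (0:ℝ) ≤ κ * (2 * (ℓ:ℝ) + 1) ^ ((2:ℝ)/3) := by positivity
    constructor <;> [nlinarith; nlinarith]
  have hcard : (s.card : ℝ) ≤ 5 * κ^3 * M ^ ((2:ℝ)/3) := by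
    have h := card_le_of_mem_bounds s _ _ ⟨ℓ₀, hℓ₀⟩ hbounds
    have : (|u| - 1 + R)/2 - (|u| - 1 - R)/2 + 1 = R + 1 := by ring
    rw [this] at h
    have : (1:ℝ) ≤ M ^ ((2:ℝ)/3) := by
      calc (1:ℝ) = 1 ^ ((2:ℝ)/3) := (Real.one_rpow _).symm
        _ ≤ M ^ ((2:ℝ)/3) := Real.rpow_le_rpow zero_le_one hM1 (by norm_num)
    nlinarith
  -- sum bound
  have hsum : (∑ ℓ ∈ s, hermiteFun ℓ ((Real.sqrt (b ℓ))⁻¹ * u) ^ 2) ≤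
      (s.card : ℝ) * ((2 * κ * C) * M ^ (-(1:ℝ)/6)) := by
    have := Finset.sum_le_card_nsmul s _ _ hterm
    rwa [nsmul_eq_mul] at this
  have htermpos : (0:ℝ) ≤ (2 * κ * C) * M ^ (-(1:ℝ)/6) := by
    apply mul_nonneg (by positivity) (Real.rpow_nonneg hM0.le _)
  have hMM : M ^ ((2:ℝ)/3) * M ^ (-(1:ℝ)/6) = M ^ ((1:ℝ)/2) := by
    rw [← Real.rpow_add hM0]; norm_num
  have hsum2 : (∑ ℓ ∈ s, hermiteFun ℓ ((Real.sqrt (b ℓ))⁻¹ * u) ^ 2) ≤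
      10 * κ^4 * C * M ^ ((1:ℝ)/2) := by
    calc (∑ ℓ ∈ s, hermiteFun ℓ ((Real.sqrt (b ℓ))⁻¹ * u) ^ 2)
        ≤ (s.card : ℝ) * ((2 * κ * C) * M ^ (-(1:ℝ)/6)) := hsum
      _ ≤ (5 * κ^3 * M ^ ((2:ℝ)/3)) * ((2 * κ * C) * M ^ (-(1:ℝ)/6)) :=
          mul_le_mul_of_nonneg_right hcard htermpos
      _ = 10 * κ^4 * C * (M ^ ((2:ℝ)/3) * M ^ (-(1:ℝ)/6)) := by ring
      _ = 10 * κ^4 * C * M ^ ((1:ℝ)/2) := by rw [hMM]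
  -- M^(1/2) ≤ 2κ x^(1/2)
  have hMx : M ≤ 2 * κ * x := by
    obtain ⟨h1, h2, -, -⟩ := hmem ℓ₀ hℓ₀
    have hu : |u| < Real.sqrt (2*κ) * (2 * (ℓ₀:ℝ) + 1) := by
      rw [div_lt_iff₀ hsq0] at h2; linarith
    have hsx : Real.sqrt (2*κ) * (2 * (ℓ₀:ℝ) + 1) ≤ 2 * κ * x := by
      have := hn1 ℓ₀
      nlinarith
    apply max_le (by linarith)
    nlinarith [hn1 ℓ₀]
  have hM12 : M ^ ((1:ℝ)/2) ≤ 2 * κ * x ^ ((1:ℝ)/2) := by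
    calc M ^ ((1:ℝ)/2) ≤ (2 * κ * x) ^ ((1:ℝ)/2) :=
          Real.rpow_le_rpow hM0.le hMx (by norm_num)
      _ = (2*κ) ^ ((1:ℝ)/2) * x ^ ((1:ℝ)/2) := Real.mul_rpow hxp.le hx0.le
      _ ≤ 2 * κ * x ^ ((1:ℝ)/2) := by
          apply mul_le_mul_of_nonneg_right _ hx12
          calc (2*κ) ^ ((1:ℝ)/2) ≤ (2*κ) ^ (1:ℝ) :=
                Real.rpow_le_rpow_of_exponent_le (by linarith) (by norm_num)
            _ = 2*κ := Real.rpow_one _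
  have h10 : (0:ℝ) ≤ 10 * κ^4 * C := by positivity
  calc (∑ ℓ ∈ s, hermiteFun ℓ ((Real.sqrt (b ℓ))⁻¹ * u) ^ 2)
      ≤ 10 * κ^4 * C * M ^ ((1:ℝ)/2) := hsum2
    _ ≤ 10 * κ^4 * C * (2 * κ * x ^ ((1:ℝ)/2)) := mul_le_mul_of_nonneg_left hM12 h10
    _ = 20 * C * κ ^ 5 * x ^ ((1:ℝ)/2) := by ring
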